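/- Suppose a sequence (x_m, y_m) of points of ℝ² is generated by alternating exact coordinate minimization of h: for every m, x_{m+1} minimizes the map x ↦ h(x, y_m) over ℝ, and y_{m+1} minimizes the map y ↦ h(x_{m+1}, y) over ℝ. Then there exists a subsequence (x_{m_k}, y_{m_k}) converging to a point (x̂, ŷ) ∈ ℝ² that is a stationary point of h, i.e., the gradient of h vanishes at (x̂, ŷ). (Proposition 2 of the paper.) -/

import Mathlib

/-!
The values `h(xₘ, yₘ)` decrease along the iteration and `h` is coercive, so the iterates stay in a
compact sublevel set and have a convergent subsequence, with limit `p`. The decreasing values then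
converge to `h p`; passing to the limit in the two coordinate-minimality inequalities shows that `p`
minimizes `h` on both coordinate lines through it, so both partial derivatives vanish at `p`.

Coercivity: with `Q` the quadratic form of `S⁻¹`, Cauchy–Schwarz gives
`h ≥ 1 + Q(z₁ - m₁) + Q(z₂ - m₂)`, and `(m₁, m₂)` is the product `(α₁ + iα₂)(v₁ + iv₂)` in `ℂᴺ`,
so `|m₁|² + |m₂|² = (α₁² + α₂²)(|v₁|² + |v₂|²)`.
-/

open Matrix Filter

/-- The objective function `h` from the paper, as a function on `ℝ × ℝ`. -/
noncomputable def hfun {N : ℕ} (S : Matrix (Fin N) (Fin N) ℝ) (z1 z2 v1 v2 : Fin N → ℝ)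
    (p : ℝ × ℝ) : ℝ :=
  (1 + (z1 - (p.1 • v1 - p.2 • v2)) ⬝ᵥ (S⁻¹ *ᵥ (z1 - (p.1 • v1 - p.2 • v2)))) *
  (1 + (z2 - (p.1 • v2 + p.2 • v1)) ⬝ᵥ (S⁻¹ *ᵥ (z2 - (p.1 • v2 + p.2 • v1)))) -
  ((z1 - (p.1 • v1 - p.2 • v2)) ⬝ᵥ (S⁻¹ *ᵥ (z2 - (p.1 • v2 + p.2 • v1)))) ^ 2

open Topology Set Metric

section AlternatingMinimization

variable {α β : Type*} {f : α × β → ℝ} {x : ℕ → α} {y : ℕ → β}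

theorem antitone_of_alternating_min
    (hx : ∀ m t, f (x (m + 1), y m) ≤ f (t, y m))
    (hy : ∀ m t, f (x (m + 1), y (m + 1)) ≤ f (x (m + 1), t)) :
    Antitone fun m => f (x m, y m) :=
  antitone_nat_of_succ_le fun m => (hy m (y m)).trans (hx m (x m))

variable [TopologicalSpace α] [TopologicalSpace β]

theorem exists_subseq_tendsto_of_alternating_min [FirstCountableTopology α]
    [FirstCountableTopology β] (hf : Tendsto f (cocompact (α × β)) atTop)
    (hx : ∀ m t, f (x (m + 1), y m) ≤ f (t, y m))
    (hy : ∀ m t, f (x (m + 1), y (m + 1)) ≤ f (x (m + 1), t)) :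
    ∃ (φ : ℕ → ℕ) (p : α × β), StrictMono φ ∧
      Tendsto (fun k => (x (φ k), y (φ k))) atTop (𝓝 p) := by
  obtain ⟨K, hK, hsub⟩ := mem_cocompact.mp (hf (Ioi_mem_atTop (f (x 0, y 0))))
  have hmem : ∀ m, (x m, y m) ∈ K := fun m => by
    by_contra h
    exact (hsub h).not_ge (antitone_of_alternating_min hx hy (Nat.zero_le m))
  obtain ⟨p, -, φ, hφ, hconv⟩ := hK.tendsto_subseq hmem
  exact ⟨φ, p, hφ, hconv⟩

theorem isMinOn_sections_of_alternating_min (hf : Continuous f)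
    (hx : ∀ m t, f (x (m + 1), y m) ≤ f (t, y m))
    (hy : ∀ m t, f (x (m + 1), y (m + 1)) ≤ f (x (m + 1), t))
    {φ : ℕ → ℕ} (hφ : StrictMono φ) {p : α × β}
    (hp : Tendsto (fun k => (x (φ k), y (φ k))) atTop (𝓝 p)) :
    IsMinOn (fun t => f (t, p.2)) univ p.1 ∧ IsMinOn (fun s => f (p.1, s)) univ p.2 := by
  have hfφ : Tendsto (fun k => f (x (φ k), y (φ k))) atTop (𝓝 (f p)) := (hf.tendsto p).comp hp
  have hlim : Tendsto (fun m => f (x m, y m)) atTop (𝓝 (f p)) :=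
    (tendsto_iff_tendsto_subseq_of_antitone (antitone_of_alternating_min hx hy)
      hφ.tendsto_atTop).2 hfφ
  refine ⟨isMinOn_univ_iff.2 fun t => ?_, isMinOn_univ_iff.2 fun s => ?_⟩
  · -- `f (x (n + 1), y n)` lies between the consecutive values at `n + 1` and `n`
    have hmid : Tendsto (fun k => f (x (φ k + 1), y (φ k))) atTop (𝓝 (f p)) :=
      tendsto_of_tendsto_of_tendsto_of_le_of_le
        (hlim.comp ((tendsto_add_atTop_nat 1).comp hφ.tendsto_atTop)) hfφ
        (fun k => hy (φ k) _) (fun k => hx (φ k) _)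
    exact le_of_tendsto_of_tendsto' hmid
      ((hf.tendsto _).comp (tendsto_const_nhds.prodMk_nhds hp.snd_nhds)) fun k => hx (φ k) t
  · refine le_of_tendsto_of_tendsto hfφ
      ((hf.tendsto _).comp (hp.fst_nhds.prodMk_nhds tendsto_const_nhds)) ?_
    filter_upwards [eventually_ge_atTop 1] with k hk
    obtain ⟨m, hm⟩ := Nat.exists_eq_add_of_le' (hk.trans (hφ.id_le k))
    simpa only [Function.comp_apply, hm] using hy m s

end AlternatingMinimization

theorem fderiv_eq_zero_of_isLocalMin_sections {E F : Type*} [NormedAddCommGroup E]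
    [NormedSpace ℝ E] [NormedAddCommGroup F] [NormedSpace ℝ F] {f : E × F → ℝ} {p : E × F}
    (hf : DifferentiableAt ℝ f p) (h₁ : IsLocalMin (fun t => f (t, p.2)) p.1)
    (h₂ : IsLocalMin (fun s => f (p.1, s)) p.2) :
    fderiv ℝ f p = 0 := by
  have hf' : HasFDerivAt f (fderiv ℝ f p) (p.1, p.2) := hf.hasFDerivAt
  ext1
  · exact h₁.hasFDerivAt_eq_zero (hf'.comp p.1 (hasFDerivAt_prodMk_left p.1 p.2))
  · exact h₂.hasFDerivAt_eq_zero (hf'.comp p.2 (hasFDerivAt_prodMk_right p.1 p.2))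

theorem exists_subseq_tendsto_fderiv_eq_zero_of_alternating_min {E F : Type*}
    [NormedAddCommGroup E] [NormedSpace ℝ E] [NormedAddCommGroup F] [NormedSpace ℝ F]
    {f : E × F → ℝ} {x : ℕ → E} {y : ℕ → F} (hf : Differentiable ℝ f)
    (hcoer : Tendsto f (cocompact (E × F)) atTop)
    (hx : ∀ m t, f (x (m + 1), y m) ≤ f (t, y m))
    (hy : ∀ m t, f (x (m + 1), y (m + 1)) ≤ f (x (m + 1), t)) :
    ∃ (φ : ℕ → ℕ) (p : E × F), StrictMono φ ∧
      Tendsto (fun k => (x (φ k), y (φ k))) atTop (𝓝 p) ∧ fderiv ℝ f p = 0 := by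
  obtain ⟨φ, p, hφ, hp⟩ := exists_subseq_tendsto_of_alternating_min hcoer hx hy
  obtain ⟨h₁, h₂⟩ := isMinOn_sections_of_alternating_min hf.continuous hx hy hφ hp
  exact ⟨φ, p, hφ, hp, fderiv_eq_zero_of_isLocalMin_sections (hf p)
    (h₁.isLocalMin univ_mem) (h₂.isLocalMin univ_mem)⟩

theorem exists_pos_mul_norm_sq_le {E : Type*} [NormedAddCommGroup E] [NormedSpace ℝ E]
    [ProperSpace E] {Q : E → ℝ} (hQ : Continuous Q) (hsmul : ∀ (c : ℝ) u, Q (c • u) = c ^ 2 * Q u)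
    (hpos : ∀ u ≠ 0, 0 < Q u) :
    ∃ ε > 0, ∀ u, ε * ‖u‖ ^ 2 ≤ Q u := by
  have hQ0 : Q 0 = 0 := by simpa using hsmul 0 0
  rcases subsingleton_or_nontrivial E with hE | hE
  · exact ⟨1, one_pos, fun u => by simp [Subsingleton.elim u 0, hQ0]⟩
  obtain ⟨u₀, hu₀, hmin⟩ := (isCompact_sphere (0 : E) 1).exists_isMinOn
    (NormedSpace.sphere_nonempty.2 zero_le_one) hQ.continuousOn
  refine ⟨Q u₀, hpos u₀ (ne_zero_of_mem_unit_sphere ⟨u₀, hu₀⟩), fun u => ?_⟩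
  rcases eq_or_ne u 0 with rfl | hu
  · simp [hQ0]
  have hnorm : ‖u‖ ≠ 0 := norm_ne_zero_iff.2 hu
  have h : Q u₀ ≤ Q (‖u‖⁻¹ • u) := isMinOn_iff.1 hmin _ (by simp [norm_smul, hnorm])
  rw [hsmul, inv_pow] at h
  calc Q u₀ * ‖u‖ ^ 2 ≤ (‖u‖ ^ 2)⁻¹ * Q u * ‖u‖ ^ 2 := by gcongr
    _ = Q u := by field_simp

theorem Matrix.PosDef.exists_pos_mul_dotProduct_self_le {n : Type*} [Fintype n]
    {M : Matrix n n ℝ} (hM : M.PosDef) :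
    ∃ ε > 0, ∀ u : n → ℝ, ε * (u ⬝ᵥ u) ≤ u ⬝ᵥ (M *ᵥ u) := by
  obtain ⟨ε, hε, h⟩ := exists_pos_mul_norm_sq_le (E := EuclideanSpace ℝ n)
    (Q := fun u => u.ofLp ⬝ᵥ (M *ᵥ u.ofLp))
    (by simp only [dotProduct, mulVec]; fun_prop)
    (fun c u => by
      simp only [WithLp.ofLp_smul, mulVec_smul, dotProduct_smul, smul_dotProduct, smul_eq_mul]
      ring)
    (fun u hu => by simpa using hM.dotProduct_mulVec_pos (by simpa using hu))
  refine ⟨ε, hε, fun u => ?_⟩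
  have h := h (WithLp.toLp 2 u)
  rw [EuclideanSpace.real_norm_sq_eq] at h
  simpa [dotProduct, sq] using h

theorem Matrix.PosSemidef.dotProduct_mulVec_sq_le {n : Type*} [Fintype n]
    {M : Matrix n n ℝ} (hM : M.PosSemidef) (u w : n → ℝ) :
    (u ⬝ᵥ (M *ᵥ w)) ^ 2 ≤ (u ⬝ᵥ (M *ᵥ u)) * (w ⬝ᵥ (M *ᵥ w)) := by
  classical
  have hsymm : w ⬝ᵥ (M *ᵥ u) = u ⬝ᵥ (M *ᵥ w) := by
    rw [dotProduct_mulVec, ← mulVec_transpose, dotProduct_comm,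
      (isHermitian_iff_isSymm.1 hM.isHermitian).eq]
  have h := LinearMap.BilinForm.apply_mul_apply_le_of_forall_zero_le (Matrix.toBilin' M)
    (fun v => by simpa [Matrix.toBilin'_apply'] using hM.dotProduct_mulVec_nonneg v) u w
  simp only [Matrix.toBilin'_apply'] at h
  rwa [hsymm, ← sq] at h

theorem dotProduct_self_le_two_mul_sub_add {n : Type*} [Fintype n] (z m : n → ℝ) :
    m ⬝ᵥ m ≤ 2 * ((z - m) ⬝ᵥ (z - m)) + 2 * (z ⬝ᵥ z) := by
  have h := dotProduct_star_self_nonneg (z + (z - m))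
  simp only [star_trivial, add_dotProduct, dotProduct_add, sub_dotProduct, dotProduct_sub,
    dotProduct_comm m z] at h ⊢
  linarith

theorem dotProduct_self_add_dotProduct_self_complexMul {n : Type*} [Fintype n] (a b : ℝ)
    (v w : n → ℝ) :
    (a • v - b • w) ⬝ᵥ (a • v - b • w) + (a • w + b • v) ⬝ᵥ (a • w + b • v)
      = (a ^ 2 + b ^ 2) * (v ⬝ᵥ v + w ⬝ᵥ w) := by
  simp only [add_dotProduct, dotProduct_add, sub_dotProduct, dotProduct_sub, smul_dotProduct,
    dotProduct_smul, smul_eq_mul, dotProduct_comm w v]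
  ring

theorem le_hfun {N : ℕ} {S : Matrix (Fin N) (Fin N) ℝ} (hS : S⁻¹.PosSemidef) {ε : ℝ}
    (hε : 0 ≤ ε) (hquad : ∀ u, ε * (u ⬝ᵥ u) ≤ u ⬝ᵥ (S⁻¹ *ᵥ u)) (z1 z2 v1 v2 : Fin N → ℝ)
    (p : ℝ × ℝ) :
    1 + ε * ((p.1 ^ 2 + p.2 ^ 2) * (v1 ⬝ᵥ v1 + v2 ⬝ᵥ v2) / 2 - (z1 ⬝ᵥ z1 + z2 ⬝ᵥ z2))
      ≤ hfun S z1 z2 v1 v2 p := by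
  unfold hfun
  set m1 := p.1 • v1 - p.2 • v2
  set m2 := p.1 • v2 + p.2 • v1
  have h1 := dotProduct_self_le_two_mul_sub_add z1 m1
  have h2 := dotProduct_self_le_two_mul_sub_add z2 m2
  calc 1 + ε * ((p.1 ^ 2 + p.2 ^ 2) * (v1 ⬝ᵥ v1 + v2 ⬝ᵥ v2) / 2 - (z1 ⬝ᵥ z1 + z2 ⬝ᵥ z2))
      = 1 + ε * ((m1 ⬝ᵥ m1 + m2 ⬝ᵥ m2) / 2 - (z1 ⬝ᵥ z1 + z2 ⬝ᵥ z2)) := by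
        rw [dotProduct_self_add_dotProduct_self_complexMul]
    _ ≤ 1 + ε * ((z1 - m1) ⬝ᵥ (z1 - m1) + (z2 - m2) ⬝ᵥ (z2 - m2)) := by
        gcongr; linarith
    _ ≤ 1 + (z1 - m1) ⬝ᵥ (S⁻¹ *ᵥ (z1 - m1)) + (z2 - m2) ⬝ᵥ (S⁻¹ *ᵥ (z2 - m2)) := by
        linarith [hquad (z1 - m1), hquad (z2 - m2)]
    _ ≤ _ := by
        nlinarith [hS.dotProduct_mulVec_sq_le (z1 - m1) (z2 - m2)]

theorem tendsto_hfun_cocompact {N : ℕ} {S : Matrix (Fin N) (Fin N) ℝ} (hS : S.PosDef)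
    {z1 z2 v1 v2 : Fin N → ℝ} (hv : (v1, v2) ≠ (0, 0)) :
    Tendsto (hfun S z1 z2 v1 v2) (cocompact (ℝ × ℝ)) atTop := by
  obtain ⟨ε, hε, hquad⟩ := hS.inv.exists_pos_mul_dotProduct_self_le
  have hV : 0 < v1 ⬝ᵥ v1 + v2 ⬝ᵥ v2 := by
    have hnonneg (v : Fin N → ℝ) : 0 ≤ v ⬝ᵥ v := by simpa using dotProduct_star_self_nonneg v
    have hpos (v : Fin N → ℝ) (h : v ≠ 0) : 0 < v ⬝ᵥ v :=
      (hnonneg v).lt_of_ne' (dotProduct_self_eq_zero.not.2 h)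
    by_cases h1 : v1 = 0
    · have h2 : v2 ≠ 0 := fun h2 => hv (by rw [h1, h2])
      linarith [hnonneg v1, hpos v2 h2]
    · linarith [hpos v1 h1, hnonneg v2]
  have hnorm : Tendsto (fun p : ℝ × ℝ =>
      ε * (v1 ⬝ᵥ v1 + v2 ⬝ᵥ v2) / 2 * ‖p‖ ^ 2 + (1 - ε * (z1 ⬝ᵥ z1 + z2 ⬝ᵥ z2)))
      (cocompact _) atTop :=
    tendsto_atTop_add_const_right _ _ <| Tendsto.const_mul_atTop (by positivity) <|
      (tendsto_pow_atTop two_ne_zero).comp tendsto_norm_cocompact_atTop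
  refine tendsto_atTop_mono (fun p => ?_) hnorm
  have hp : ‖p‖ ^ 2 ≤ p.1 ^ 2 + p.2 ^ 2 := by
    rw [Prod.norm_def, Real.norm_eq_abs, Real.norm_eq_abs]
    rcases max_choice |p.1| |p.2| with h | h <;> rw [h, sq_abs] <;>
      nlinarith [sq_nonneg p.1, sq_nonneg p.2]
  have := le_hfun hS.inv.posSemidef hε.le hquad z1 z2 v1 v2 p
  have := mul_le_mul_of_nonneg_left hp (by positivity : 0 ≤ ε * (v1 ⬝ᵥ v1 + v2 ⬝ᵥ v2) / 2)
  linarith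

theorem differentiable_hfun {N : ℕ} (S : Matrix (Fin N) (Fin N) ℝ) (z1 z2 v1 v2 : Fin N → ℝ) :
    Differentiable ℝ (hfun S z1 z2 v1 v2) := by
  unfold hfun
  simp only [Matrix.mulVec, dotProduct, Pi.sub_apply, Pi.add_apply, Pi.smul_apply,
    smul_eq_mul]
  fun_prop

theorem hfun_alternating_min_subseq_stationary_general {N : ℕ}
    (S : Matrix (Fin N) (Fin N) ℝ) (hS : S.PosDef)
    (z1 z2 v1 v2 : Fin N → ℝ) (hv : (v1, v2) ≠ (0, 0))
    (x y : ℕ → ℝ)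
    (hx : ∀ m : ℕ, ∀ t : ℝ,
      hfun S z1 z2 v1 v2 (x (m+1), y m) ≤ hfun S z1 z2 v1 v2 (t, y m))
    (hy : ∀ m : ℕ, ∀ t : ℝ,
      hfun S z1 z2 v1 v2 (x (m+1), y (m+1)) ≤ hfun S z1 z2 v1 v2 (x (m+1), t)) :
    ∃ (φ : ℕ → ℕ) (p : ℝ × ℝ), StrictMono φ ∧
      Tendsto (fun k => (x (φ k), y (φ k))) atTop (nhds p) ∧
      fderiv ℝ (hfun S z1 z2 v1 v2) p = 0 :=
  exists_subseq_tendsto_fderiv_eq_zero_of_alternating_min (differentiable_hfun S z1 z2 v1 v2)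
    (tendsto_hfun_cocompact hS hv) hx hy

/-- Proposition 2: an alternating exact coordinate minimization sequence for `h`
admits a subsequence converging to a stationary point of `h`. -/
theorem hfun_alternating_min_subseq_stationary {N : ℕ} (hN : 1 ≤ N)
    (S : Matrix (Fin N) (Fin N) ℝ) (hS : S.PosDef)
    (z1 z2 v1 v2 : Fin N → ℝ) (hv : (v1, v2) ≠ (0, 0))
    (x y : ℕ → ℝ)
    (hx : ∀ m : ℕ, ∀ t : ℝ,
      hfun S z1 z2 v1 v2 (x (m+1), y m) ≤ hfun S z1 z2 v1 v2 (t, y m))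
    (hy : ∀ m : ℕ, ∀ t : ℝ,
      hfun S z1 z2 v1 v2 (x (m+1), y (m+1)) ≤ hfun S z1 z2 v1 v2 (x (m+1), t)) :
    ∃ (φ : ℕ → ℕ) (p : ℝ × ℝ), StrictMono φ ∧
      Tendsto (fun k => (x (φ k), y (φ k))) atTop (nhds p) ∧
      fderiv ℝ (hfun S z1 z2 v1 v2) p = 0 :=
  hfun_alternating_min_subseq_stationary_general S hS z1 z2 v1 v2 hv x y hx hy
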